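/- Let G be a graph with κ(G) = δ(G), n ≥ 3, and suppose S ⊆ V(G × Kₙ) with |S| = (n−1)δ(G) contains an entire fiber S_i = {u_i} × V(Kₙ) for some vertex u_i of G. Then (G × Kₙ) − S is connected. -/

import Mathlib

/-!
Let `t z` be the number of deleted vertices in the fibre `{z} × Kₙ` and let `W` be the set of
fibres keeping at most one vertex. Since the fibre of `u` is deleted entirely,
`(n - 1)|W| < ∑ t = (n - 1)δ`, so `|W| < δ = κ`: the graph `G - W` is connected, every vertex has
a neighbour outside `W`, and every fibre outside `W` keeps two vertices. Hence the survivors are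
linked along `G - W` as soon as the survivors of each fibre outside `W` are linked to each other.

If `(x, i)` and `(x, i')` are not, a fibre adjacent to `x` can only keep the colours `i` and `i'`,
and for a neighbour `y ∉ W` of `x` the neighbourhoods of `x` and `y` outside `W` are disjoint
(a common neighbour would link `(x, i)` to `(x, i')`). These are at least `2(δ - |W|)` fibres,
each losing `n - 2` vertices, and `(n - 1)|W| + 1 + 2(n - 2)(δ - |W|) ≤ (n - 1)δ` fails for `n ≥ 3`.
-/

open SimpleGraph

/-- The Kronecker (tensor) product of two simple graphs. -/
def tensorProd {α β : Type*} (G : SimpleGraph α) (H : SimpleGraph β) : SimpleGraph (α × β) where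
  Adj p q := G.Adj p.1 q.1 ∧ H.Adj p.2 q.2
  symm := ⟨fun p q h => ⟨G.adj_symm h.1, H.adj_symm h.2⟩⟩
  loopless := ⟨fun p h => G.loopless.irrefl p.1 h.1⟩

instance {α β : Type*} (G : SimpleGraph α) (H : SimpleGraph β)
    [DecidableRel G.Adj] [DecidableRel H.Adj] : DecidableRel (tensorProd G H).Adj :=
  fun _ _ => instDecidableAnd

/-- `S` is a separating set of `G`: deleting `S` leaves a single vertex or a
disconnected (possibly empty) graph. -/
def IsSeparating {V : Type*} (G : SimpleGraph V) (S : Set V) : Prop :=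
  Sᶜ.ncard = 1 ∨ ¬ (G.induce Sᶜ).Connected

/-- The vertex connectivity `κ(G)`: the minimum cardinality of a separating set. -/
noncomputable def kappa {V : Type*} [Fintype V] (G : SimpleGraph V) : ℕ :=
  sInf {k | ∃ S : Set V, IsSeparating G S ∧ S.ncard = k}

/-- A graph is super-connected (super-κ) if every minimum separating set is the
neighborhood of some vertex. -/
def SuperK {V : Type*} [Fintype V] (G : SimpleGraph V) : Prop :=
  ∀ S : Set V, IsSeparating G S → S.ncard = kappa G → ∃ v, S = G.neighborSet v

open Finset

namespace SimpleGraph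

variable {V : Type*} {G : SimpleGraph V}

theorem Preconnected.induction_on (hG : G.Preconnected) {P : V → Prop}
    (step : ∀ x y, G.Adj x y → P x → P y) {a : V} (ha : P a) (b : V) : P b := by
  induction (reachable_iff_reflTransGen a b).1 (hG a b) with
  | refl => exact ha
  | tail _ hxy ih => exact step _ _ hxy ih

theorem minDegree_le_card_sdiff_add_card [Fintype V] [DecidableRel G.Adj] [DecidableEq V]
    (x : V) (W : Finset V) : G.minDegree ≤ #(G.neighborFinset x \ W) + #W :=
  (G.minDegree_le_degree x).trans card_le_card_sdiff_add_card

theorem exists_adj_notMem_of_card_lt_minDegree [Fintype V] [DecidableRel G.Adj] [DecidableEq V]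
    {W : Finset V} (hW : #W < G.minDegree) (x : V) : ∃ y ∉ W, G.Adj x y := by
  obtain ⟨y, hy⟩ : (G.neighborFinset x \ W).Nonempty :=
    card_pos.1 (by have := G.minDegree_le_card_sdiff_add_card x W; omega)
  rw [mem_sdiff, mem_neighborFinset] at hy
  exact ⟨y, hy.2, hy.1⟩

end SimpleGraph

theorem connected_induce_compl_of_ncard_lt_kappa {V : Type*} [Fintype V] {G : SimpleGraph V}
    {X : Set V} (hX : X.ncard < kappa G) : (G.induce Xᶜ).Connected := by
  by_contra h
  exact (Nat.sInf_le ⟨X, Or.inr h, rfl⟩ : kappa G ≤ X.ncard).not_gt hX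

theorem Set.ncard_eq_sum_ncard_preimage_prodMk {α β : Type*} [Fintype α] [Fintype β]
    (S : Set (α × β)) : S.ncard = ∑ z, (Prod.mk z ⁻¹' S).ncard := by
  classical
  calc S.ncard = ∑ p, if p ∈ S then 1 else 0 := by
        simp [Finset.sum_boole, Set.ncard_eq_toFinset_card']
    _ = ∑ z, ∑ k, if (z, k) ∈ S then 1 else 0 := Fintype.sum_prod_type _
    _ = ∑ z, (Prod.mk z ⁻¹' S).ncard := by
        simp [Finset.sum_boole, Set.ncard_eq_toFinset_card']

section TensorTop

variable {α β : Type*} {G : SimpleGraph α} {S : Set (α × β)}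

theorem reachable_induce_compl_of_adj {x y : α} {i j : β} (hxi : (x, i) ∉ S) (hyj : (y, j) ∉ S)
    (hxy : G.Adj x y) (hij : i ≠ j) :
    ((tensorProd G ⊤).induce Sᶜ).Reachable ⟨(x, i), hxi⟩ ⟨(y, j), hyj⟩ :=
  Adj.reachable ⟨hxy, hij⟩

def SeparatedInFiber (G : SimpleGraph α) (S : Set (α × β)) (x : α) (i i' : β) : Prop :=
  ∃ (hi : (x, i) ∉ S) (hi' : (x, i') ∉ S),
    ¬ ((tensorProd G ⊤).induce Sᶜ).Reachable ⟨(x, i), hi⟩ ⟨(x, i'), hi'⟩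

namespace SeparatedInFiber

variable {x y z : α} {i i' : β}

theorem ne (h : SeparatedInFiber G S x i i') : i ≠ i' := by
  rintro rfl
  obtain ⟨_, _, hsep⟩ := h
  exact hsep (Reachable.refl _)

theorem mem_of_adj (h : SeparatedInFiber G S x i i') (hxz : G.Adj x z) {j : β} (hj : j ≠ i)
    (hj' : j ≠ i') : (z, j) ∈ S := by
  obtain ⟨hi, hi', hsep⟩ := h
  by_contra hzj
  exact hsep ((reachable_induce_compl_of_adj hi hzj hxz hj.symm).trans
    (reachable_induce_compl_of_adj hzj hi' hxz.symm hj'))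

/-- By `mem_of_adj` the fibre of `z` keeps only colours among `i`, `i'`; having two survivors,
it keeps exactly these. -/
theorem of_adj (h : SeparatedInFiber G S x i i') (hxz : G.Adj x z)
    (htwo : ∀ j, ∃ k ≠ j, (z, k) ∉ S) : SeparatedInFiber G S z i i' := by
  have hii' := h.ne
  obtain ⟨k, hki, hk⟩ := htwo i
  obtain ⟨k', hk'i', hk'⟩ := htwo i'
  obtain rfl : k = i' := by_contra fun hki' => hk (h.mem_of_adj hxz hki hki')
  obtain rfl : k' = i := by_contra fun hk'i => hk' (h.mem_of_adj hxz hk'i hk'i')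
  obtain ⟨hi, hi', hsep⟩ := h
  refine ⟨hk', hk, fun hz => hsep ?_⟩
  exact (reachable_induce_compl_of_adj hi hk hxz hii').trans
    (hz.symm.trans (reachable_induce_compl_of_adj hk' hi' hxz.symm hii'))

theorem not_adj (h : SeparatedInFiber G S x i i') (hxy : G.Adj x y) (hxz : G.Adj x z)
    (hyi : (y, i) ∉ S) (hzi' : (z, i') ∉ S) : ¬ G.Adj y z := by
  intro hyz
  have hii' := h.ne
  obtain ⟨hi, hi', hsep⟩ := h
  -- the triangle `xzy` lifts to the path `(x, i) - (z, i') - (y, i) - (x, i')`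
  exact hsep ((reachable_induce_compl_of_adj hi hzi' hxz hii').trans
    ((reachable_induce_compl_of_adj hzi' hyi hyz.symm hii'.symm).trans
      (reachable_induce_compl_of_adj hyi hi' hxy.symm hii')))

end SeparatedInFiber

theorem connected_induce_compl_of_forall_fiber [Nonempty β] {W : Set α}
    (hW : (G.induce Wᶜ).Connected) (hnbr : ∀ y, ∃ z ∉ W, G.Adj y z)
    (htwo : ∀ z ∉ W, ∀ j : β, ∃ k ≠ j, (z, k) ∉ S)
    (hfiber : ∀ z k k', ¬ SeparatedInFiber G S z k k') :
    ((tensorProd G (⊤ : SimpleGraph β)).induce Sᶜ).Connected := by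
  obtain ⟨⟨z₀, hz₀⟩⟩ := hW.nonempty
  obtain ⟨k₀, -, hk₀⟩ := htwo z₀ hz₀ (Classical.arbitrary β)
  set p₀ : ↥Sᶜ := ⟨(z₀, k₀), hk₀⟩
  have hgood : ∀ z : ↥Wᶜ, ∀ k (hk : (z.1, k) ∉ S),
      ((tensorProd G ⊤).induce Sᶜ).Reachable p₀ ⟨(z.1, k), hk⟩ := by
    refine hW.preconnected.induction_on ?_ (a := ⟨z₀, hz₀⟩) fun k hk => ?_
    · rintro ⟨x, hx⟩ ⟨y, _⟩ hxy hx_good k hk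
      obtain ⟨j, hjk, hj⟩ := htwo x hx k
      exact (hx_good j hj).trans (reachable_induce_compl_of_adj hj hk hxy hjk)
    · by_contra hsep
      exact hfiber z₀ k₀ k ⟨hk₀, hk, hsep⟩
  suffices hreach : ∀ p, ((tensorProd G ⊤).induce Sᶜ).Reachable p₀ p by
    have : Nonempty ↥Sᶜ := ⟨p₀⟩
    exact ⟨fun p q => (hreach p).symm.trans (hreach q)⟩
  rintro ⟨⟨y, j⟩, hyj⟩
  obtain ⟨z, hz, hyz⟩ := hnbr y
  obtain ⟨k, hkj, hk⟩ := htwo z hz j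
  exact (hgood ⟨z, hz⟩ k hk).trans (reachable_induce_compl_of_adj hk hyj hyz.symm hkj)

end TensorTop

section Fibers

variable {α : Type*} {n : ℕ} {S : Set (α × Fin n)}

theorem ncard_preimage_add_ncard_preimage_compl (z : α) :
    (Prod.mk z ⁻¹' S).ncard + (Prod.mk z ⁻¹' Sᶜ).ncard = n := by
  rw [Set.preimage_compl, Set.ncard_add_ncard_compl, Nat.card_eq_fintype_card, Fintype.card_fin]

theorem sub_two_le_ncard_preimage_of_compl_subset {z : α} {i i' : Fin n}
    (h : Prod.mk z ⁻¹' Sᶜ ⊆ {i, i'}) : n - 2 ≤ (Prod.mk z ⁻¹' S).ncard := by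
  have := Set.ncard_le_ncard h
  have := Set.ncard_insert_le i {i'}
  have := ncard_preimage_add_ncard_preimage_compl (S := S) z
  rw [Set.ncard_singleton] at *
  omega

theorem SeparatedInFiber.sub_two_le_ncard_preimage {G : SimpleGraph α} {x z : α} {i i' : Fin n}
    (h : SeparatedInFiber G S x i i') (hxz : G.Adj x z) : n - 2 ≤ (Prod.mk z ⁻¹' S).ncard :=
  sub_two_le_ncard_preimage_of_compl_subset fun j hj => by
    by_contra hji
    exact hj (h.mem_of_adj hxz (not_or.1 hji).1 (not_or.1 hji).2)

variable [Fintype α]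

variable (S) in
noncomputable def nearlyDeletedFibers : Finset α :=
  univ.filter fun z => n - 1 ≤ (Prod.mk z ⁻¹' S).ncard

theorem exists_ne_notMem_of_notMem_nearlyDeletedFibers {z : α}
    (hz : z ∉ nearlyDeletedFibers S) (j : Fin n) : ∃ k ≠ j, (z, k) ∉ S := by
  simp only [nearlyDeletedFibers, mem_filter, mem_univ, true_and, not_le] at hz
  have := ncard_preimage_add_ncard_preimage_compl (S := S) z
  obtain ⟨k, hk, hkj⟩ := Set.exists_ne_of_one_lt_ncard (s := Prod.mk z ⁻¹' Sᶜ) (by omega) j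
  exact ⟨k, hkj, hk⟩

theorem mul_card_nearlyDeletedFibers_lt (hn : 0 < n) {u : α} (hu : ∀ k, (u, k) ∈ S) :
    (n - 1) * #(nearlyDeletedFibers S) <
      ∑ z ∈ nearlyDeletedFibers S, (Prod.mk z ⁻¹' S).ncard := by
  have hu_full : (Prod.mk u ⁻¹' S).ncard = n := by
    rw [Set.preimage_eq_univ_iff.2 (by rintro _ ⟨k, rfl⟩; exact hu k)]
    simp
  rw [mul_comm, ← smul_eq_mul, ← sum_const]
  refine sum_lt_sum (fun z hz => (mem_filter.1 hz).2) ⟨u, ?_, by omega⟩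
  simp [nearlyDeletedFibers, hu_full]

theorem not_separatedInFiber {G : SimpleGraph α}
    [DecidableRel G.Adj] [DecidableEq α] (hn : 3 ≤ n)
    (hsum : ∑ z, (Prod.mk z ⁻¹' S).ncard = (n - 1) * G.minDegree)
    (hW : (n - 1) * #(nearlyDeletedFibers S) <
      ∑ z ∈ nearlyDeletedFibers S, (Prod.mk z ⁻¹' S).ncard)
    (hWd : #(nearlyDeletedFibers S) < G.minDegree)
    (x : α) (i i' : Fin n) : ¬ SeparatedInFiber G S x i i' := by
  set W := nearlyDeletedFibers S
  set t := fun z => (Prod.mk z ⁻¹' S).ncard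
  intro hsep
  have htwo : ∀ z ∉ W, ∀ j, ∃ k ≠ j, (z, k) ∉ S := fun z hz =>
    exists_ne_notMem_of_notMem_nearlyDeletedFibers hz
  obtain ⟨y, hyW, hxy⟩ := exists_adj_notMem_of_card_lt_minDegree hWd x
  have hysep := hsep.of_adj hxy (htwo y hyW)
  set A := G.neighborFinset x \ W
  set B := G.neighborFinset y \ W
  have hA : ∀ z ∈ A, n - 2 ≤ t z := fun z hz =>
    hsep.sub_two_le_ncard_preimage ((mem_neighborFinset ..).1 (mem_sdiff.1 hz).1)
  have hB : ∀ z ∈ B, n - 2 ≤ t z := fun z hz =>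
    hysep.sub_two_le_ncard_preimage ((mem_neighborFinset ..).1 (mem_sdiff.1 hz).1)
  have hAB : Disjoint A B := by
    refine disjoint_left.2 fun z hzA hzB => ?_
    obtain ⟨hxz, hzW⟩ : G.Adj x z ∧ z ∉ W := by simpa [A] using hzA
    have hyz : G.Adj y z := by simpa [B] using (mem_sdiff.1 hzB).1
    exact hsep.not_adj hxy hxz hysep.1 (hysep.of_adj hyz (htwo z hzW)).2.1 hyz
  have htotal : ∑ z ∈ W, t z + ∑ z ∈ A, t z + ∑ z ∈ B, t z ≤ (n - 1) * G.minDegree := by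
    rw [← hsum, add_assoc, ← sum_union hAB, ← sum_union (disjoint_union_right.2
      ⟨sdiff_disjoint.symm, sdiff_disjoint.symm⟩)]
    exact sum_le_sum_of_subset (subset_univ _)
  have hAt := card_nsmul_le_sum A t _ hA
  have hBt := card_nsmul_le_sum B t _ hB
  have hAd := G.minDegree_le_card_sdiff_add_card x W
  have hBd := G.minDegree_le_card_sdiff_add_card y W
  rw [smul_eq_mul] at hAt hBt
  obtain ⟨m, rfl⟩ : ∃ m, n = m + 3 := ⟨n - 3, by omega⟩
  simp only [show m + 3 - 1 = m + 2 by omega, show m + 3 - 2 = m + 1 by omega] at hW hAt hBt htotal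
  nlinarith

end Fibers

theorem stmt18_general {α : Type*} [Fintype α] (G : SimpleGraph α) [DecidableRel G.Adj]
    (hk : kappa G = G.minDegree)
    (n : ℕ) (hn : 3 ≤ n) (S : Set (α × Fin n))
    (hcard : S.ncard = (n - 1) * G.minDegree)
    (u : α) (hu : ∀ v : Fin n, (u, v) ∈ S) :
    ((tensorProd G (⊤ : SimpleGraph (Fin n))).induce Sᶜ).Connected := by
  classical
  have : Nonempty (Fin n) := ⟨⟨0, by omega⟩⟩
  set W := nearlyDeletedFibers S
  have hsum : ∑ z, (Prod.mk z ⁻¹' S).ncard = (n - 1) * G.minDegree := by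
    rw [← Set.ncard_eq_sum_ncard_preimage_prodMk, hcard]
  have hW := mul_card_nearlyDeletedFibers_lt (by omega) hu
  have hWd : #W < G.minDegree :=
    Nat.lt_of_mul_lt_mul_left (hW.trans_le (hsum ▸ sum_le_sum_of_subset (subset_univ W)))
  exact connected_induce_compl_of_forall_fiber (W := ↑W)
    (connected_induce_compl_of_ncard_lt_kappa (by rwa [Set.ncard_coe_finset, hk]))
    (exists_adj_notMem_of_card_lt_minDegree hWd)
    (fun z hz => exists_ne_notMem_of_notMem_nearlyDeletedFibers hz)
    (not_separatedInFiber hn hsum hW hWd)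

theorem stmt18 {α : Type*} [Fintype α] [Nonempty α] (G : SimpleGraph α) [DecidableRel G.Adj]
    (hconn : G.Connected) (hk : kappa G = G.minDegree) (hd : 1 ≤ G.minDegree)
    (n : ℕ) (hn : 3 ≤ n) (S : Set (α × Fin n))
    (hcard : S.ncard = (n - 1) * G.minDegree)
    (u : α) (hu : ∀ v : Fin n, (u, v) ∈ S) :
    ((tensorProd G (⊤ : SimpleGraph (Fin n))).induce Sᶜ).Connected :=
  stmt18_general G hk n hn S hcard u hu
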